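/- arXiv:2601.15571 — 4 statements merged into one kernel-verified Lean document; each statement's English description precedes it below -/
import Mathlib

section
/- A coordinate set I is sufficient if and only if I contains every relevant coordinate, where coordinate i is relevant if there exist states s, s' differing only at coordinate i with Opt(s) ≠ Opt(s'). -/
/-- The set of optimal actions at state `s`. -/
def Opt {A : Type} [Fintype A] {S : Type} (U : A → S → ℚ) (s : S) : Set A :=
  {a | ∀ b, U b s ≤ U a s}

/-- A coordinate set `I` is sufficient if states agreeing on `I` have equal optimal sets. -/
def Sufficient {A : Type} [Fintype A] {n : ℕ} {X : Fin n → Type}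
    (U : A → (∀ i, X i) → ℚ) (I : Finset (Fin n)) : Prop :=
  ∀ s s' : ∀ i, X i, (∀ i ∈ I, s i = s' i) → Opt U s = Opt U s'

/-- Coordinate `i` is relevant if two states differing only at `i` have different optimal sets. -/
def Relevant {A : Type} [Fintype A] {n : ℕ} {X : Fin n → Type}
    (U : A → (∀ i, X i) → ℚ) (i : Fin n) : Prop :=
  ∃ s s' : ∀ j, X j, (∀ j, j ≠ i → s j = s' j) ∧ Opt U s ≠ Opt U s'

/-! In the language of `DependsOn`: `I` is sufficient iff `Opt U` depends only on `I`, and `j` is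
irrelevant iff `Opt U` depends only on `{j}ᶜ`. The sets on which a function of a product depends
are closed under intersection, and `I = ⋂ j ∉ I, {j}ᶜ`. -/

section DependsOn

variable {ι κ β : Type*} {α : ι → Type*} {f : (∀ i, α i) → β}

/-- Passing from `x` to `y` through the state that is `x` on `s` and `y` off `s`: the first
step only changes coordinates outside `s`, the second only coordinates outside `t`. -/
theorem DependsOn.inter {s t : Set ι} (hs : DependsOn f s) (ht : DependsOn f t) :
    DependsOn f (s ∩ t) := by
  classical
  intro x y hxy
  let z : ∀ i, α i := fun i => if i ∈ s then x i else y i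
  have hxz : f x = f z := hs fun i hi => by simp [z, hi]
  have hzy : f z = f y := ht fun i hi => by
    by_cases his : i ∈ s
    · simp [z, his, hxy i ⟨his, hi⟩]
    · simp [z, his]
  exact hxz.trans hzy

theorem DependsOn.biInter_finset {T : Finset κ} {s : κ → Set ι}
    (h : ∀ k ∈ T, DependsOn f (s k)) : DependsOn f (⋂ k ∈ T, s k) := by
  classical
  induction T using Finset.induction_on with
  | empty => simpa using dependsOn_univ f
  | insert k T _ ih =>
    rw [Finset.set_biInter_insert]
    exact (h k (Finset.mem_insert_self k T)).inter
      (ih fun j hj => h j (Finset.mem_insert_of_mem hj))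

end DependsOn

section Coordinates

variable {A : Type} [Fintype A] {n : ℕ} {X : Fin n → Type} (U : A → (∀ i, X i) → ℚ)

theorem sufficient_iff_dependsOn (I : Finset (Fin n)) :
    Sufficient U I ↔ DependsOn (Opt U) (I : Set (Fin n)) :=
  Iff.rfl

theorem relevant_iff_not_dependsOn (i : Fin n) :
    Relevant U i ↔ ¬ DependsOn (Opt U) ({i}ᶜ : Set (Fin n)) := by
  simp [Relevant, DependsOn]

end Coordinates

theorem sufficient_iff_contains_relevant_general {A : Type} [Fintype A] {n : ℕ} {X : Fin n → Type}
    (U : A → (∀ i, X i) → ℚ) (I : Finset (Fin n)) :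
    Sufficient U I ↔ ∀ i : Fin n, Relevant U i → i ∈ I := by
  simp only [sufficient_iff_dependsOn, relevant_iff_not_dependsOn]
  constructor
  · intro hI i hi
    by_contra hiI
    exact hi (hI.mono (by simpa using hiI))
  · intro hrel
    have hcompl : ∀ j ∈ Iᶜ, DependsOn (Opt U) ({j}ᶜ : Set (Fin n)) := fun j hj =>
      not_not.mp fun hj' => Finset.mem_compl.mp hj (hrel j hj')
    have hI : (⋂ j ∈ Iᶜ, ({j}ᶜ : Set (Fin n))) = I := by
      ext i
      simp only [Set.mem_iInter, Finset.mem_compl, Set.mem_compl_singleton_iff, Finset.mem_coe]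
      exact ⟨fun h => by_contra fun hi => h i hi rfl, fun hi j hj hij => hj (hij ▸ hi)⟩
    rw [← hI]
    exact DependsOn.biInter_finset hcompl

theorem sufficient_iff_contains_relevant {A : Type} [Fintype A] {n : ℕ} {X : Fin n → Type}
    [∀ i, Fintype (X i)] [∀ i, Nonempty (X i)]
    (U : A → (∀ i, X i) → ℚ) (I : Finset (Fin n)) :
    Sufficient U I ↔ ∀ i : Fin n, Relevant U i → i ∈ I :=
  sufficient_iff_contains_relevant_general U I
end

section
/- The set of relevant coordinates is itself a sufficient set, and hence is the unique minimum sufficient set. -/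
theorem Function.apply_eq_of_update_invariant {ι : Type*} [DecidableEq ι] {X : ι → Type*}
    {β : Type*} (f : (∀ i, X i) → β) (T : Finset ι)
    (hf : ∀ i ∈ T, ∀ s x, f (Function.update s i x) = f s) :
    ∀ s s' : ∀ i, X i, (∀ i ∉ T, s i = s' i) → f s = f s' := by
  induction T using Finset.induction_on with
  | empty => exact fun s s' h => congrArg f (funext fun i => h i (Finset.notMem_empty i))
  | @insert j T hj ih =>
    intro s s' h
    have hupdate : ∀ i ∉ T, Function.update s j (s' j) i = s' i := by
      intro i hi
      by_cases hij : i = j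
      · subst hij; exact Function.update_self ..
      · rw [Function.update_of_ne hij]
        exact h i (by simp [hi, hij])
    calc f s = f (Function.update s j (s' j)) := (hf j (Finset.mem_insert_self j T) s _).symm
      _ = f s' := ih (fun i hi => hf i (Finset.mem_insert_of_mem hi)) _ s' hupdate

section
variable {A : Type} [Fintype A] {n : ℕ} {X : Fin n → Type} {U : A → (∀ i, X i) → ℚ}

theorem opt_update_eq_of_not_relevant {i : Fin n} (hi : ¬ Relevant U i) (s : ∀ j, X j)
    (x : X i) : Opt U (Function.update s i x) = Opt U s :=
  not_not.mp fun hne => hi ⟨_, _, fun _ hj => Function.update_of_ne hj x s, hne⟩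

theorem Relevant.mem_of_sufficient {i : Fin n} (hi : Relevant U i) {J : Finset (Fin n)}
    (hJ : Sufficient U J) : i ∈ J := by
  by_contra hiJ
  obtain ⟨s, s', hdiff, hne⟩ := hi
  exact hne (hJ s s' fun k hk => hdiff k (ne_of_mem_of_not_mem hk hiJ))

theorem sufficient_iff_forall_relevant_mem {I : Finset (Fin n)} :
    Sufficient U I ↔ ∀ i, Relevant U i → i ∈ I := by
  refine ⟨fun hI i hi => hi.mem_of_sufficient hI, fun hrel s s' h => ?_⟩
  refine Function.apply_eq_of_update_invariant (Opt U) (Finset.univ \ I) ?_ s s' ?_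
  · intro i hi
    exact opt_update_eq_of_not_relevant fun hrel_i => (Finset.mem_sdiff.mp hi).2 (hrel i hrel_i)
  · intro i hi
    exact h i (by simpa using hi)

end

open Classical in
theorem relevant_set_is_unique_minimum_general {A : Type} [Fintype A] {n : ℕ} {X : Fin n → Type}
    (U : A → (∀ i, X i) → ℚ) :
    Sufficient U (Finset.univ.filter (fun i => Relevant U i)) ∧
    (∀ J : Finset (Fin n), Sufficient U J →
      (Finset.univ.filter (fun i => Relevant U i)).card ≤ J.card) ∧
    (∀ J : Finset (Fin n), Sufficient U J →
      J.card = (Finset.univ.filter (fun i => Relevant U i)).card →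
      J = Finset.univ.filter (fun i => Relevant U i)) := by
  have hsub : ∀ J, Sufficient U J → Finset.univ.filter (fun i => Relevant U i) ⊆ J :=
    fun J hJ i hi => (Finset.mem_filter.mp hi).2.mem_of_sufficient hJ
  refine ⟨sufficient_iff_forall_relevant_mem.mpr fun i hi => by simpa using hi,
    fun J hJ => Finset.card_le_card (hsub J hJ), fun J hJ hcard => ?_⟩
  exact (Finset.eq_of_subset_of_card_le (hsub J hJ) hcard.le).symm

open Classical in
theorem relevant_set_is_unique_minimum {A : Type} [Fintype A] {n : ℕ} {X : Fin n → Type}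
    [∀ i, Fintype (X i)] [∀ i, Nonempty (X i)]
    (U : A → (∀ i, X i) → ℚ) :
    Sufficient U (Finset.univ.filter (fun i => Relevant U i)) ∧
    (∀ J : Finset (Fin n), Sufficient U J →
      (Finset.univ.filter (fun i => Relevant U i)).card ≤ J.card) ∧
    (∀ J : Finset (Fin n), Sufficient U J →
      J.card = (Finset.univ.filter (fun i => Relevant U i)).card →
      J = Finset.univ.filter (fun i => Relevant U i)) :=
  relevant_set_is_unique_minimum_general U
end

section
/- For a Boolean formula φ over n variables, the reduction decision problem (with actions {accept, reject}, states being either a distinguished reference state or an assignment a ∈ {0,1}^n, utilities U(accept, reference)=1, U(reject, reference)=0, U(accept, a)=φ(a) (interpreted as 0 or 1), U(reject, a)=0) satisfies: the empty coordinate set is sufficient if and only if φ is a tautology. -/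
/-- Utility of the TAUTOLOGY reduction: states are `none` (the reference state) or
`some a` for an assignment `a`; action `true` is accept, `false` is reject. -/
def reductionU {n : ℕ} (φ : (Fin n → Bool) → Bool) :
    Bool → Option (Fin n → Bool) → ℚ := fun b s =>
  if b then (match s with
    | none => 1
    | some a => if φ a then 1 else 0)
  else 0

section Opt

variable {A S : Type} [Fintype A] {U : A → S → ℚ} {s : S}

theorem Opt_eq_singleton_of_forall_lt {a : A} (h : ∀ b, b ≠ a → U b s < U a s) :
    Opt U s = {a} := by
  ext c
  refine ⟨fun hc => ?_, fun hc b => ?_⟩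
  · by_contra hca
    exact (h c hca).not_ge (hc a)
  · rw [Set.mem_singleton_iff.mp hc]
    by_cases hba : b = a
    · rw [hba]
    · exact (h b hba).le

theorem Opt_eq_univ_of_forall_eq (h : ∀ b c, U b s = U c s) : Opt U s = Set.univ :=
  Set.eq_univ_of_forall fun c b => (h b c).le

end Opt

section reductionU

variable {n : ℕ} (φ : (Fin n → Bool) → Bool)

theorem Opt_reductionU_none : Opt (reductionU φ) none = {true} :=
  Opt_eq_singleton_of_forall_lt fun b hb => by
    simp [Bool.eq_false_iff.mpr hb, reductionU]

theorem Opt_reductionU_some_of_true {a : Fin n → Bool} (ha : φ a = true) :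
    Opt (reductionU φ) (some a) = {true} :=
  Opt_eq_singleton_of_forall_lt fun b hb => by
    simp [Bool.eq_false_iff.mpr hb, reductionU, ha]

theorem Opt_reductionU_some_of_false {a : Fin n → Bool} (ha : φ a = false) :
    Opt (reductionU φ) (some a) = Set.univ :=
  Opt_eq_univ_of_forall_eq fun b c => by
    cases b <;> cases c <;> simp [reductionU, ha]

end reductionU

theorem tautology_iff_empty_sufficient {n : ℕ} (φ : (Fin n → Bool) → Bool) :
    (∀ s s' : Option (Fin n → Bool), Opt (reductionU φ) s = Opt (reductionU φ) s')
      ↔ (∀ a : Fin n → Bool, φ a = true) := by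
  constructor
  · intro hconst a
    by_contra ha
    have hsome_none := hconst (some a) none
    rw [Opt_reductionU_some_of_false φ (Bool.eq_false_iff.mpr ha), Opt_reductionU_none]
      at hsome_none
    exact Bool.false_ne_true (Set.mem_singleton_iff.mp (hsome_none ▸ Set.mem_univ false))
  · intro htaut
    have hopt : ∀ t, Opt (reductionU φ) t = {true} := by
      rintro (_ | a)
      · exact Opt_reductionU_none φ
      · exact Opt_reductionU_some_of_true φ (htaut a)
    intro s s'
    rw [hopt s, hopt s']
end

section
/- In the ∃∀-SAT reduction with actions {YES, NO}, states (x,y) ∈ {0,1}^k × {0,1}^m with m ≥ 1, U(YES,(x,y)) = 2 if φ(x,y) else 0, and U(NO,(x,y)) = 1 if y = 0^m else 0: there exists an assignment α to the x-coordinates such that Opt is constant on the subcube {(α, y) : y ∈ {0,1}^m} if and only if ∃x ∀y φ(x,y) holds. -/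
/-- Utility of the ∃∀-SAT reduction: action `true` is YES, `false` is NO. -/
def anchorU {k m : ℕ} (φ : (Fin k → Bool) → (Fin m → Bool) → Bool) :
    Bool → ((Fin k → Bool) × (Fin m → Bool)) → ℚ := fun b s =>
  if b then (if φ s.1 s.2 then 2 else 0)
  else (if s.2 = (fun _ => false) then 1 else 0)

theorem anchor_iff_exists_forall {k m : ℕ} (hm : 1 ≤ m)
    (φ : (Fin k → Bool) → (Fin m → Bool) → Bool) :
    (∃ α : Fin k → Bool, ∀ y y' : Fin m → Bool,
        Opt (anchorU φ) (α, y) = Opt (anchorU φ) (α, y'))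
      ↔ (∃ x : Fin k → Bool, ∀ y : Fin m → Bool, φ x y = true) := by
  constructor
  · rintro ⟨α, h⟩
    refine ⟨α, ?_⟩
    by_contra hno
    push_neg at hno
    obtain ⟨y0, hy0⟩ := hno
    replace hy0 : φ α y0 = false := Bool.not_eq_true _ |>.mp hy0
    -- false ∈ Opt at y0
    have h1 : false ∈ Opt (anchorU φ) (α, y0) := by
      intro b
      cases b <;> simp [anchorU, hy0] <;> split <;> norm_num
    have h2 : false ∈ Opt (anchorU φ) (α, fun _ => false) := by
      rw [← h y0 (fun _ => false)]; exact h1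
    have h3 : φ α (fun _ => false) = false := by
      have := h2 true
      by_contra hc
      rw [Bool.not_eq_false] at hc
      simp [anchorU, hc] at this
    have h4 : true ∉ Opt (anchorU φ) (α, fun _ => false) := by
      intro hc
      have := hc false
      simp [anchorU, h3] at this
      norm_num at this
    have hne : (fun _ : Fin m => true) ≠ (fun _ : Fin m => false) := by
      intro hc
      have := congrFun hc ⟨0, hm⟩
      simp at this
    have h5 : true ∈ Opt (anchorU φ) (α, fun _ => true) := by
      intro b
      cases b <;> simp [anchorU, hne] <;> split <;> norm_num
    rw [h (fun _ => true) (fun _ => false)] at h5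
    exact h4 h5
  · rintro ⟨x, hx⟩
    refine ⟨x, fun y y' => ?_⟩
    have key : ∀ y : Fin m → Bool, Opt (anchorU φ) (x, y) = {true} := by
      intro y
      ext a
      cases a
      · simp only [Opt, Set.mem_setOf_eq, Set.mem_singleton_iff]
        constructor
        · intro hmem
          have := hmem true
          simp [anchorU, hx y] at this
          split at this <;> norm_num at this
        · intro hc; exact absurd hc (by simp)
      · simp only [Opt, Set.mem_setOf_eq, Set.mem_singleton_iff]
        constructor
        · intro _; trivial
        · intro _ b
          cases b <;> simp [anchorU, hx y] <;> split <;> norm_num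
    rw [key y, key y']
end
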